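/- arXiv:1806.09302 — 3 statements merged into one kernel-verified Lean document; each statement's English description precedes it below -/
import Mathlib

section
/- Let d be a positive integer, let ω : [0,∞) → ℝ^d be right-continuous at every t ≥ 0, let O ⊆ ℝ^d be a bounded open set, and let h be a real number with 0 ≤ h ≤ τ_O(ω). Then the exit time of the shifted path from the closure of O satisfies τ_{cl(O)}(θ_h ω) = τ_{cl(O)}(ω) − h (an identity in [0,∞], where ∞ − h = ∞; note τ_{cl(O)}(ω) ≥ τ_O(ω) ≥ h so the subtraction is well defined). -/
open scoped NNReal ENNReal

/-- Exit time of a path `ω : [0,∞) → E` from a set `B`: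
`τ_B(ω) = inf {t > 0 : ω t ∉ B}`, valued in `[0,∞]` with `inf ∅ = ∞`. -/
noncomputable def exitTime {E : Type*} (B : Set E) (ω : ℝ≥0 → E) : ℝ≥0∞ :=
  sInf ((fun t : ℝ≥0 => (t : ℝ≥0∞)) '' {t : ℝ≥0 | 0 < t ∧ ω t ∉ B})

open Set Filter Topology

/-! Exiting the closure of `O` cannot happen before `τ_O(ω) ≥ h`, so every exit time `t` of `ω`
from `cl O` is at least `h`. If `t > h`, then `t - h` is an exit time of the shifted path; if
`t = h`, the point `ω h` lies in the open set `(cl O)ᶜ`, and right-continuity keeps the shifted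
path there for small positive times, so its exit time is `0`. The reverse inequality holds for
any set, since `h + s` is an exit time of `ω` whenever `s` is one of `θ_h ω`. -/

section ExitTime

variable {E : Type*} {B : Set E} {ω : ℝ≥0 → E}

theorem exitTime_le {t : ℝ≥0} (ht : 0 < t) (hωt : ω t ∉ B) : exitTime B ω ≤ t :=
  sInf_le ⟨t, ⟨ht, hωt⟩, rfl⟩

theorem le_exitTime {a : ℝ≥0∞} (ha : ∀ t : ℝ≥0, 0 < t → ω t ∉ B → a ≤ t) : a ≤ exitTime B ω :=
  le_sInf <| forall_mem_image.2 fun _ ht => ha _ ht.1 ht.2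

theorem exitTime_mono {C : Set E} (hBC : B ⊆ C) : exitTime B ω ≤ exitTime C ω :=
  le_exitTime fun _ ht hωt => exitTime_le ht fun hB => hωt (hBC hB)

theorem exitTime_sub_le_exitTime_shift (h : ℝ≥0) :
    exitTime B ω - h ≤ exitTime B (fun s => ω (h + s)) :=
  le_exitTime fun s hs hωs => by
    rw [tsub_le_iff_left]
    exact_mod_cast exitTime_le (add_pos_of_nonneg_of_pos h.2 hs) hωs

theorem exitTime_eq_zero [TopologicalSpace E] (hB : IsClosed B)
    (hω : ContinuousWithinAt ω (Ici 0) 0) (hω0 : ω 0 ∉ B) : exitTime B ω = 0 := by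
  have hout : ∀ᶠ s in 𝓝[>] 0, ω s ∉ B :=
    nhdsWithin_mono _ Ioi_subset_Ici_self (hω.eventually_mem (hB.isOpen_compl.mem_nhds hω0))
  refine nonpos_iff_eq_zero.1 (ENNReal.le_of_forall_pos_le_add fun ε hε _ => ?_)
  obtain ⟨s, hωs, hs0, hsε⟩ := (hout.and (Ioo_mem_nhdsGT hε)).exists
  calc exitTime B ω ≤ s := exitTime_le hs0 hωs
    _ ≤ 0 + ε := by rw [zero_add]; exact_mod_cast hsε.le

theorem exitTime_shift_of_le_exitTime [TopologicalSpace E] (hB : IsClosed B) {h : ℝ≥0}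
    (hω : ContinuousWithinAt ω (Ici h) h) (hh : (h : ℝ≥0∞) ≤ exitTime B ω) :
    exitTime B (fun s => ω (h + s)) = exitTime B ω - h := by
  refine le_antisymm ?_ (exitTime_sub_le_exitTime_shift h)
  rw [ENNReal.cancel_coe.le_tsub_iff_left hh]
  refine le_exitTime fun t ht hωt => ?_
  have hht : h ≤ t := by exact_mod_cast hh.trans (exitTime_le ht hωt)
  rcases hht.lt_or_eq with hlt | rfl
  · have hshift : exitTime B (fun s => ω (h + s)) ≤ (t - h : ℝ≥0) :=
      exitTime_le (tsub_pos_of_lt hlt) (by rwa [add_tsub_cancel_of_le hht])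
    calc (h : ℝ≥0∞) + exitTime B (fun s => ω (h + s)) ≤ h + (t - h : ℝ≥0) := by gcongr
      _ = t := by rw [← ENNReal.coe_add, add_tsub_cancel_of_le hht]
  · have hshift_cont : ContinuousWithinAt (fun s => ω (h + s)) (Ici 0) 0 :=
      hω.comp_of_eq (continuous_const_add h).continuousWithinAt
        (fun s _ => le_add_of_nonneg_right s.2) (add_zero h)
    rw [exitTime_eq_zero hB hshift_cont (by rwa [add_zero]), add_zero]

end ExitTime

theorem exitTime_closure_shift_general (d : ℕ)
    (ω : ℝ≥0 → EuclideanSpace ℝ (Fin d))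
    (hrc : ∀ t : ℝ≥0, ContinuousWithinAt ω (Set.Ici t) t)
    (O : Set (EuclideanSpace ℝ (Fin d)))
    (h : ℝ≥0) (hh : (h : ℝ≥0∞) ≤ exitTime O ω) :
    exitTime (closure O) (fun s => ω (h + s)) = exitTime (closure O) ω - (h : ℝ≥0∞) :=
  exitTime_shift_of_le_exitTime isClosed_closure (hrc h)
    (hh.trans (exitTime_mono subset_closure))

/-- Proposition 3.5: if `0 ≤ h ≤ τ_O(ω)`, then the exit time of the shifted path
`θ_h ω` from the closure of `O` satisfies `τ_{cl O}(θ_h ω) = τ_{cl O}(ω) - h`. -/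
theorem exitTime_closure_shift (d : ℕ) (hd : 0 < d)
    (ω : ℝ≥0 → EuclideanSpace ℝ (Fin d))
    (hrc : ∀ t : ℝ≥0, ContinuousWithinAt ω (Set.Ici t) t)
    (O : Set (EuclideanSpace ℝ (Fin d))) (hO : IsOpen O)
    (hObdd : Bornology.IsBounded O)
    (h : ℝ≥0) (hh : (h : ℝ≥0∞) ≤ exitTime O ω) :
    exitTime (closure O) (fun s => ω (h + s)) = exitTime (closure O) ω - (h : ℝ≥0∞) :=
  exitTime_closure_shift_general d ω hrc O h hh
end

section
/- Let d be a positive integer, let ω : [0,∞) → ℝ^d be càdlàg, let O ⊆ ℝ^d be open, and suppose 0 < τ⁻_O(ω) < ∞; write ζ⁻ := τ⁻_O(ω). If either (i) ω⁻(ζ⁻) ∈ O, or (ii) ω(ζ⁻) = ω⁻(ζ⁻), then ω(ζ⁻) ∉ O, and consequently τ_O(ω) ≤ ζ⁻. -/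
open scoped NNReal ENNReal

/-- `ωm` is the left-limit path `ω⁻` of `ω`: `ω⁻(0) = ω(0)` and
`ω⁻(t) = lim_{s↑t} ω(s)` for `t > 0`. -/
def IsLeftLimitPath {E : Type*} [TopologicalSpace E] (ω ωm : ℝ≥0 → E) : Prop :=
  ωm 0 = ω 0 ∧
    ∀ t : ℝ≥0, 0 < t → Filter.Tendsto ω (nhdsWithin t (Set.Iio t)) (nhds (ωm t))

/-! If `ω(ζ⁻) ∈ O`, right-continuity keeps `ω` inside a closed neighbourhood of `ω(ζ⁻)` contained
in `O` on some interval `[ζ⁻, u)`, so every left limit `ω⁻(t)` with `ζ⁻ < t < u` stays in that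
neighbourhood, hence in `O`. If moreover `ω⁻(ζ⁻) ∈ O`, then `ω⁻` would not leave `O` before `u`,
contradicting `τ⁻_O(ω) = ζ⁻`. Otherwise `ω⁻(ζ⁻) ∉ O`, and case (ii) gives `ω(ζ⁻) = ω⁻(ζ⁻) ∉ O`. -/

open Filter Topology Set

section ExitTime

variable {E : Type*} {B : Set E} {ω : ℝ≥0 → E}

theorem exitTime_le_of_notMem {t : ℝ≥0} (ht : 0 < t) (hω : ω t ∉ B) :
    exitTime B ω ≤ t :=
  sInf_le ⟨t, ⟨ht, hω⟩, rfl⟩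

theorem le_exitTime_of_forall_mem {u : ℝ≥0∞}
    (h : ∀ t : ℝ≥0, 0 < t → (t : ℝ≥0∞) < u → ω t ∈ B) : u ≤ exitTime B ω := by
  refine le_sInf ?_
  rintro _ ⟨t, ⟨ht, hω⟩, rfl⟩
  by_contra! htu
  exact hω (h t ht htu)

theorem frequently_notMem_nhdsGT_of_exitTime_eq {ζ : ℝ≥0} (hζ : exitTime B ω = ζ)
    (hmem : ω ζ ∈ B) : ∃ᶠ t in 𝓝[>] ζ, ω t ∉ B := by
  simp only [Filter.Frequently, not_not]
  intro hev
  obtain ⟨u, hζu, hIoo⟩ := mem_nhdsGT_iff_exists_Ioo_subset.1 hev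
  have hu : (u : ℝ≥0∞) ≤ exitTime B ω := by
    refine le_exitTime_of_forall_mem fun t ht htu => ?_
    rcases lt_trichotomy t ζ with htζ | rfl | hζt
    · by_contra hω
      have := (exitTime_le_of_notMem ht hω).trans_lt (ENNReal.coe_lt_coe.2 htζ)
      exact this.ne hζ
    · exact hmem
    · exact hIoo ⟨hζt, ENNReal.coe_lt_coe.1 htu⟩
  rw [hζ] at hu
  exact (ENNReal.coe_le_coe.1 hu).not_gt hζu

end ExitTime

theorem eventually_leftLimit_mem_nhdsGT {E : Type*} [TopologicalSpace E] [RegularSpace E]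
    {ω ωm : ℝ≥0 → E} (hll : IsLeftLimitPath ω ωm) {ζ : ℝ≥0}
    (hrc : ContinuousWithinAt ω (Ici ζ) ζ) {O : Set E} (hO : IsOpen O) (hω : ω ζ ∈ O) :
    ∀ᶠ t in 𝓝[>] ζ, ωm t ∈ O := by
  obtain ⟨C, hC, hCclosed, hCO⟩ := exists_mem_nhds_isClosed_subset (hO.mem_nhds hω)
  obtain ⟨u, hζu, hIco⟩ := mem_nhdsGE_iff_exists_Ico_subset.1 (hrc hC)
  filter_upwards [Ioo_mem_nhdsGT hζu] with t ht
  have : (𝓝[<] t).NeBot := nhdsLT_neBot_of_exists_lt ⟨ζ, ht.1⟩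
  have hev : ∀ᶠ s in 𝓝[<] t, ω s ∈ C :=
    mem_of_superset (Ioo_mem_nhdsLT ht.1) fun s hs => hIco ⟨hs.1.le, hs.2.trans ht.2⟩
  exact hCO (hCclosed.mem_of_tendsto (hll.2 t (ht.1.pos)) hev)

theorem exitTime_le_leftLimit_exitTime_general (d : ℕ)
    (ω ωm : ℝ≥0 → EuclideanSpace ℝ (Fin d))
    (hrc : ∀ t : ℝ≥0, ContinuousWithinAt ω (Set.Ici t) t)
    (hll : IsLeftLimitPath ω ωm)
    (O : Set (EuclideanSpace ℝ (Fin d))) (hO : IsOpen O)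
    (ζ : ℝ≥0) (hζpos : 0 < ζ) (hζ : (ζ : ℝ≥0∞) = exitTime O ωm)
    (hcase : ωm ζ ∈ O ∨ ω ζ = ωm ζ) :
    ω ζ ∉ O ∧ exitTime O ω ≤ (ζ : ℝ≥0∞) := by
  have hleft : ωm ζ ∈ O → ω ζ ∉ O := fun hm hω =>
    ((frequently_notMem_nhdsGT_of_exitTime_eq hζ.symm hm).and_eventually
      (eventually_leftLimit_mem_nhdsGT hll (hrc ζ) hO hω)).exists.elim fun _ h => h.1 h.2
  have hnot : ω ζ ∉ O := by
    by_cases hm : ωm ζ ∈ O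
    · exact hleft hm
    · rcases hcase with h | h
      · exact absurd h hm
      · rwa [h]
  exact ⟨hnot, exitTime_le_of_notMem hζpos hnot⟩

/-- Deterministic core of Proposition 3.4: for a càdlàg path `ω` and an open set `O`,
with `ζ⁻ := τ⁻_O(ω) ∈ (0,∞)`, if either `ω⁻(ζ⁻) ∈ O` or `ω(ζ⁻) = ω⁻(ζ⁻)`,
then `ω(ζ⁻) ∉ O` and hence `τ_O(ω) ≤ ζ⁻`. -/
theorem exitTime_le_leftLimit_exitTime (d : ℕ) (hd : 0 < d)
    (ω ωm : ℝ≥0 → EuclideanSpace ℝ (Fin d))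
    (hrc : ∀ t : ℝ≥0, ContinuousWithinAt ω (Set.Ici t) t)
    (hll : IsLeftLimitPath ω ωm)
    (O : Set (EuclideanSpace ℝ (Fin d))) (hO : IsOpen O)
    (ζ : ℝ≥0) (hζpos : 0 < ζ) (hζ : (ζ : ℝ≥0∞) = exitTime O ωm)
    (hcase : ωm ζ ∈ O ∨ ω ζ = ωm ζ) :
    ω ζ ∉ O ∧ exitTime O ω ≤ (ζ : ℝ≥0∞) :=
  exitTime_le_leftLimit_exitTime_general d ω ωm hrc hll O hO ζ hζpos hζ hcase
end

section
/- For x = (x₁,x₂) ∈ [−1,1]×[0,1], let ζ(x) := inf{t > 0 : (x₁ + t, x₂ − x₁² + (x₁+t)²) ∉ [−1,1]×[0,1]}. Then for every a ∈ (−1,0), the function ζ is discontinuous at the point (a, a²): indeed ζ(a, a²) = 1 − a, while ζ(a, a² − δ) = −a − √δ for every δ with 0 < δ ≤ a², so ζ(a, a² − δ) → −a ≠ 1 − a as δ ↓ 0. -/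
/-!
On the curve `x₂ = x₁²` the path runs along the parabola `y = x²` itself, which touches the
bottom edge of the box only at its vertex, so it leaves the box through the right edge at
time `1 - a`. Just below the curve the path is the parabola lowered by `δ`, which dips below
the bottom edge while `|x₁ + t| < √δ`, so it exits at time `-a - √δ → -a`.
-/

open scoped NNReal ENNReal

/-- The exit time `ζ(x) = inf {t > 0 : (x₁ + t, x₂ - x₁² + (x₁+t)²) ∉ [-1,1] × [0,1]}`
of Example 3.3. -/
noncomputable def zetaEx (x₁ x₂ : ℝ) : ℝ≥0∞ :=
  exitTime (Set.Icc (-1 : ℝ) 1 ×ˢ Set.Icc (0 : ℝ) 1)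
    (fun t : ℝ≥0 => (x₁ + (t : ℝ), x₂ - x₁ ^ 2 + (x₁ + (t : ℝ)) ^ 2))

open Filter Set Topology

section ExitTime

variable {E : Type*} {B : Set E} {ω : ℝ≥0 → E}

lemma exitTime_le_ofReal {s : ℝ} (hs : 0 < s) (h : ω s.toNNReal ∉ B) :
    exitTime B ω ≤ ENNReal.ofReal s :=
  sInf_le ⟨s.toNNReal, ⟨Real.toNNReal_pos.2 hs, h⟩, rfl⟩

lemma ofReal_le_exitTime {c : ℝ} (h : ∀ t : ℝ≥0, 0 < t → (t : ℝ) < c → ω t ∈ B) :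
    ENNReal.ofReal c ≤ exitTime B ω := by
  refine le_sInf ?_
  rintro _ ⟨t, ⟨ht, hout⟩, rfl⟩
  exact (ENNReal.ofReal_le_ofReal (not_lt.1 fun hlt => hout (h t ht hlt))).trans_eq
    ENNReal.ofReal_coe_nnreal

lemma exitTime_eq_ofReal {c ε : ℝ} (hc : 0 ≤ c) (hε : 0 < ε)
    (h_in : ∀ t : ℝ≥0, 0 < t → (t : ℝ) < c → ω t ∈ B)
    (h_out : ∀ t : ℝ≥0, c < t → (t : ℝ) < c + ε → ω t ∉ B) :
    exitTime B ω = ENNReal.ofReal c := by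
  refine le_antisymm ?_ (ofReal_le_exitTime h_in)
  have hlim : Tendsto ENNReal.ofReal (𝓝[>] c) (𝓝 (ENNReal.ofReal c)) :=
    ENNReal.continuous_ofReal.continuousWithinAt.tendsto
  refine ge_of_tendsto hlim ?_
  filter_upwards [Ioo_mem_nhdsGT (lt_add_of_pos_right c hε)] with s ⟨hcs, hsε⟩
  have hs : 0 < s := hc.trans_lt hcs
  refine exitTime_le_ofReal hs (h_out _ ?_ ?_) <;> rwa [Real.coe_toNNReal s hs.le]

end ExitTime

section Curve

variable {a : ℝ}

theorem zetaEx_on_curve (ha : a ∈ Ico (-1 : ℝ) 1) :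
    zetaEx a (a ^ 2) = ENNReal.ofReal (1 - a) := by
  obtain ⟨ha₁, ha₂⟩ := ha
  refine exitTime_eq_ofReal (by linarith) one_pos (fun t ht htc => ?_) (fun t htc _ hmem => ?_)
  · have ht' : (0 : ℝ) < t := ht
    simp only [mem_prod, mem_Icc, sub_self, zero_add]
    refine ⟨⟨?_, ?_⟩, ?_, ?_⟩ <;> nlinarith
  · simp only [mem_prod, mem_Icc] at hmem
    linarith [hmem.1.2]

theorem zetaEx_below_curve (ha : a ∈ Ico (-1 : ℝ) 0) {δ : ℝ} (hδ : 0 < δ) (hδa : δ ≤ a ^ 2) :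
    zetaEx a (a ^ 2 - δ) = ENNReal.ofReal (-a - √δ) := by
  obtain ⟨ha₁, ha₂⟩ := ha
  have hsq : √δ ^ 2 = δ := Real.sq_sqrt hδ.le
  have hpos : 0 < √δ := Real.sqrt_pos.2 hδ
  have hle : √δ ≤ -a := by nlinarith
  refine exitTime_eq_ofReal (by linarith) (by positivity : 0 < 2 * √δ)
    (fun t ht htc => ?_) (fun t htc htε hmem => ?_)
  · have ht' : (0 : ℝ) < t := ht
    simp only [mem_prod, mem_Icc]
    refine ⟨⟨?_, ?_⟩, ?_, ?_⟩ <;> nlinarith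
  · simp only [mem_prod, mem_Icc] at hmem
    -- `(t - c) * (c + 2√δ - t) = δ - (a + t)²` with `c = -a - √δ`
    nlinarith [hmem.2.1, mul_pos (sub_pos.2 htc) (sub_pos.2 htε)]

theorem tendsto_zetaEx_below_curve (ha : a ∈ Ico (-1 : ℝ) 0) :
    Tendsto (fun δ => zetaEx a (a ^ 2 - δ)) (𝓝[>] 0) (𝓝 (ENNReal.ofReal (-a))) := by
  have hsqrt : Tendsto (fun δ : ℝ => -a - √δ) (𝓝 0) (𝓝 (-a)) :=
    (continuous_const.sub Real.continuous_sqrt).tendsto' 0 (-a) (by simp)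
  refine (ENNReal.tendsto_ofReal (tendsto_nhdsWithin_of_tendsto_nhds hsqrt)).congr' ?_
  filter_upwards [Ioo_mem_nhdsGT (sq_pos_of_neg ha.2)] with δ ⟨hδ, hδa⟩
  exact (zetaEx_below_curve ha hδ hδa.le).symm

end Curve

/-- Example 3.3 (discontinuity claim): for every `a ∈ (-1,0)`, the exit-time map
`ζ` is discontinuous at `(a, a²)`: indeed `ζ(a, a²) = 1 - a` while
`ζ(a, a² - δ) = -a - √δ` for `0 < δ ≤ a²`, so `ζ(a, a² - δ) → -a ≠ 1 - a` as `δ ↓ 0`. -/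
theorem zeta_discontinuous_on_curve (a : ℝ) (ha : a ∈ Set.Ioo (-1 : ℝ) 0) :
    zetaEx a (a ^ 2) = ENNReal.ofReal (1 - a) ∧
    (∀ δ : ℝ, 0 < δ → δ ≤ a ^ 2 →
      zetaEx a (a ^ 2 - δ) = ENNReal.ofReal (-a - Real.sqrt δ)) ∧
    Filter.Tendsto (fun δ : ℝ => zetaEx a (a ^ 2 - δ))
      (nhdsWithin 0 (Set.Ioi 0)) (nhds (ENNReal.ofReal (-a))) ∧
    ENNReal.ofReal (-a) ≠ ENNReal.ofReal (1 - a) := by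
  have ha' : a ∈ Ico (-1 : ℝ) 0 := Ioo_subset_Ico_self ha
  exact ⟨zetaEx_on_curve ⟨ha'.1, ha'.2.trans one_pos⟩, fun _ => zetaEx_below_curve ha',
    tendsto_zetaEx_below_curve ha',
    ((ENNReal.ofReal_lt_ofReal_iff (by linarith [ha.2])).2 (by linarith)).ne⟩
end
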